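/- Define 𝕏₃ := {α ∈ 2^ω : ∀n ∃p ≥ n such that α|p is placed}, where u ∈ 2^{<ω} is placed if u ≠ ∅ and there exists t ∈ ω^{<ω} with N_u ∩ K_t ≠ ∅, (|u|−1)₀ = Σ^t_{|t|}, and u(|u|−1) = 1 whenever (|u|−1)₁ > 0. Then 𝕏₃ is a dense G_δ subset of 2^ω. -/

import Mathlib

/-- Triangular numbers. -/
def tri (m : ℕ) : ℕ := m * (m + 1) / 2

/-- The pairing `⟨n,p⟩ := (Σ_{k ≤ n+p} k) + p`. -/
def pairN (n p : ℕ) : ℕ := tri (n + p) + p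

/-- `Σ^t_k := Σ_{j<k} (t(j) + 2)`. -/
def sigT (t : List ℕ) (k : ℕ) : ℕ := ((t.take k).map (· + 2)).sum

/-- The set `K_t ⊆ 2^ω`: for each `k < |t|`, the vertical slices numbered
`Σ^t_k, …, Σ^t_k + t(k) + 1` are prescribed: the `i`-th of them is
`(w_{t(k)})_i · 0^∞`, except that the `0`-th one additionally carries a `1`
at position `t(k) + 1` (i.e. equals `(w_{t(k)})₀·0^{t(k)+1-|(w_{t(k)})₀|}·1·0^∞`). -/
def Kt (w : ℕ → List Bool) (t : List ℕ) : Set (ℕ → Bool) :=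
  {α | ∀ k < t.length, ∀ i < t.getD k 0 + 2, ∀ p,
    α (pairN (sigT t k + i) p) =
      if i = 0 ∧ p = t.getD k 0 + 1 then true
      else (w (t.getD k 0)).getD (pairN i p) false}

/-- The clopen piece `K^ε_t := {α ∈ K_t : α(⟨Σ^t_{|t|}, 0⟩) = ε}`. -/
def Keps (w : ℕ → List Bool) (t : List ℕ) (ε : Bool) : Set (ℕ → Bool) :=
  {α | α ∈ Kt w t ∧ α (pairN (sigT t t.length) 0) = ε}

/-- `M(q) := max {m : Σ_{k≤m} k ≤ q}`. -/
def Mq (q : ℕ) : ℕ := Nat.findGreatest (fun m => tri m ≤ q) q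

/-- The second inverse-pairing coordinate: `(q)₁ := q − Σ_{k≤M(q)} k`. -/
def unpair1 (q : ℕ) : ℕ := q - tri (Mq q)

/-- The first inverse-pairing coordinate: `(q)₀ := M(q) − (q)₁`. -/
def unpair0 (q : ℕ) : ℕ := Mq q - unpair1 q

/-- The basic clopen set `N_u := {α : u ⊆ α}`. -/
def Nu (u : List Bool) : Set (ℕ → Bool) := {α | ∀ k < u.length, α k = u.getD k false}

/-- `u` is placed with witness `t`: `N_u ∩ K_t ≠ ∅`, `(|u|−1)₀ = Σ^t_{|t|}`, and
`u(|u|−1) = 1` whenever `(|u|−1)₁ > 0`. -/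
def PlacedWit (w : ℕ → List Bool) (u : List Bool) (t : List ℕ) : Prop :=
  (Nu u ∩ Kt w t).Nonempty ∧ unpair0 (u.length - 1) = sigT t t.length ∧
  (0 < unpair1 (u.length - 1) → u.getD (u.length - 1) false = true)

/-- `u` is placed: `u ≠ ∅` and it has some witness. -/
def Placed (w : ℕ → List Bool) (u : List Bool) : Prop :=
  u ≠ [] ∧ ∃ t : List ℕ, PlacedWit w u t

/-- The initial segment `α|p` as a finite sequence. -/
def restr (α : ℕ → Bool) (p : ℕ) : List Bool := List.ofFn fun i : Fin p => α i

/-- `𝕏₃ := {α ∈ 2^ω : ∀n ∃p ≥ n, α|p is placed}`. -/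
def X3 (w : ℕ → List Bool) : Set (ℕ → Bool) := {α | ∀ n, ∃ p ≥ n, Placed w (restr α p)}

/-!
Placedness of `α|p` depends only on finitely many coordinates of `α`, so `𝕏₃` is `G_δ`.
For density the empty witness `t = []` suffices: `K_[]` is everything and `Σ^[]_0 = 0`, while
the positions `q = tri m + m` are exactly those with `(q)₀ = 0` and `(q)₁ = m`. Hence every
sequence that is eventually `1` lies in `𝕏₃`, and such sequences are dense.
-/

open Filter Topology

lemma tri_succ (m : ℕ) : tri (m + 1) = tri m + (m + 1) := by
  unfold tri
  rw [show (m + 1) * (m + 1 + 1) = m * (m + 1) + (m + 1) * 2 by ring, Nat.add_mul_div_right _ _ two_pos]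

lemma tri_mono : Monotone tri := fun _ _ h =>
  Nat.div_le_div_right (Nat.mul_le_mul h (by omega))

lemma le_tri (m : ℕ) : m ≤ tri m := by
  induction m with
  | zero => exact Nat.zero_le _
  | succ k ih => rw [tri_succ]; omega

lemma Mq_tri_add_self (m : ℕ) : Mq (tri m + m) = m := by
  refine Nat.findGreatest_eq_iff.mpr ⟨by omega, fun _ => by omega, fun k hk _ htk => ?_⟩
  have := tri_mono (Nat.succ_le_of_lt hk)
  rw [tri_succ] at this
  omega

lemma unpair1_tri_add_self (m : ℕ) : unpair1 (tri m + m) = m := by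
  rw [unpair1, Mq_tri_add_self]; omega

lemma unpair0_tri_add_self (m : ℕ) : unpair0 (tri m + m) = 0 := by
  rw [unpair0, Mq_tri_add_self, unpair1_tri_add_self, Nat.sub_self]

lemma Kt_nil (w : ℕ → List Bool) : Kt w [] = Set.univ :=
  Set.eq_univ_of_forall fun _ k hk => absurd hk (Nat.not_lt_zero k)

lemma sigT_nil (k : ℕ) : sigT [] k = 0 := by
  simp [sigT]

@[simp]
lemma length_restr (α : ℕ → Bool) (p : ℕ) : (restr α p).length = p :=
  List.length_ofFn

lemma getD_restr (α : ℕ → Bool) {p k : ℕ} (hk : k < p) : (restr α p).getD k false = α k := by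
  simp [restr, hk]

lemma mem_Nu_restr (α : ℕ → Bool) (p : ℕ) : α ∈ Nu (restr α p) := fun _ hk =>
  (getD_restr α (by simpa using hk)).symm

lemma isLocallyConstant_restr (p : ℕ) : IsLocallyConstant fun α : ℕ → Bool => restr α p :=
  (IsLocallyConstant.of_discrete fun f : Fin p → Bool => List.ofFn f).comp_continuous
    (continuous_pi fun i => continuous_apply (i : ℕ))

lemma placed_restr_tri_succ (w : ℕ → List Bool) {α : ℕ → Bool} {m : ℕ}
    (hα : α (tri m + m) = true) : Placed w (restr α (tri (m + 1))) := by
  have hlast : tri (m + 1) - 1 = tri m + m := by rw [tri_succ]; omega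
  have hpos : 0 < tri (m + 1) := by rw [tri_succ]; omega
  refine ⟨List.ne_nil_of_length_pos (by rwa [length_restr]), [], ?_, ?_, ?_⟩
  · exact ⟨α, mem_Nu_restr α _, Kt_nil w ▸ Set.mem_univ α⟩
  · rw [length_restr, hlast, unpair0_tri_add_self, sigT_nil]
  · intro _
    rw [length_restr, getD_restr α (by omega), hlast, hα]

lemma mem_X3_of_eventually_true (w : ℕ → List Bool) {α : ℕ → Bool}
    (hα : ∀ᶠ i in atTop, α i = true) : α ∈ X3 w := by
  obtain ⟨N, hN⟩ := eventually_atTop.mp hα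
  intro n
  refine ⟨tri (max n N + 1), ?_, placed_restr_tri_succ w (hN _ ?_)⟩
  · have := le_tri (max n N + 1); omega
  · have := le_tri (max n N); omega

lemma dense_eventually_eq {β : Type*} [TopologicalSpace β] (b : β) :
    Dense {α : ℕ → β | ∀ᶠ i in atTop, α i = b} := by
  intro α
  let trunc : ℕ → ℕ → β := fun N i => if i < N then α i else b
  have htrunc : Tendsto trunc atTop (𝓝 α) := tendsto_pi_nhds.mpr fun i =>
    tendsto_const_nhds.congr' <| (eventually_gt_atTop i).mono fun N hN => (if_pos hN).symm
  refine mem_closure_of_tendsto htrunc (Eventually.of_forall fun N => ?_)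
  exact (eventually_ge_atTop N).mono fun i hi => if_neg (Nat.not_lt.mpr hi)

lemma X3_eq_iInter (w : ℕ → List Bool) :
    X3 w = ⋂ n, ⋃ p ∈ Set.Ici n, (fun α => restr α p) ⁻¹' {u | Placed w u} := by
  ext α
  simp [X3]

theorem stmt15_general (w : ℕ → List Bool) :
    Dense (X3 w) ∧ IsGδ (X3 w) := by
  constructor
  · exact (dense_eventually_eq true).mono fun α hα => mem_X3_of_eventually_true w hα
  · rw [X3_eq_iInter]
    exact IsGδ.iInter_of_isOpen fun n =>
      isOpen_biUnion fun p _ => isLocallyConstant_restr p _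

/-- `𝕏₃` is a dense `G_δ` subset of `2^ω`. -/
theorem stmt15 (w : ℕ → List Bool) (hw : ∀ n, (w n).length = n + 1)
    (hdense : ∀ s : List Bool, ∃ n, s <+: w n) :
    Dense (X3 w) ∧ IsGδ (X3 w) :=
  stmt15_general w
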